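/- arXiv:1805.08177 — 8 statements merged into one kernel-verified Lean document; each statement's English description precedes it below -/
import Mathlib

section
/- Let V be a finite type, Δ ⊆ V, and let π = {V₁, …, Vₙ} (n ≥ 2) be pairwise disjoint nonempty subsets of V ∖ Δ whose union is V ∖ Δ. For U ⊆ V and a boolean function f on V, define the projection proj_U f by (proj_U f) x = true iff there exists y : V → Bool agreeing with x on U such that f y = true. If f is Δ-decomposable with π, then for every assignment x : V → Bool, f x = (proj_{V₁∪Δ} f) x && ⋯ && (proj_{Vₙ∪Δ} f) x; i.e., the projections of f onto the sets Vᵢ ∪ Δ are Δ-decomposition components of f. -/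
/-- A boolean function `f` on variables `W` depends only on the variables in `U`. -/
def DependsOnlyOn {W : Type*} (f : (W → Bool) → Bool) (U : Set W) : Prop :=
  ∀ x y : W → Bool, (∀ v ∈ U, x v = y v) → f x = f y

/-- `f` is Δ-decomposable with the partition `π = {Vs 0, …, Vs (n-1)}` of `vars ∖ Δ`:
`n ≥ 2` and `f` is the pointwise conjunction of components each depending only on `Vs i ∪ Δ`. -/
def DeltaDecomposableWith {V : Type*} (f : (V → Bool) → Bool) (Δ : Set V)
    {n : ℕ} (Vs : Fin n → Set V) : Prop :=
  2 ≤ n ∧ ∃ fs : Fin n → ((V → Bool) → Bool),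
    (∀ x, f x = true ↔ ∀ i, fs i x = true) ∧
    ∀ i, DependsOnlyOn (fs i) (Vs i ∪ Δ)

/-- Projection of `f` onto `U`: `proj U f x = true` iff some assignment agreeing
with `x` on `U` satisfies `f`. -/
noncomputable def proj {V : Type*} (U : Set V)
    (f : (V → Bool) → Bool) : (V → Bool) → Bool :=
  open Classical in fun x => decide (∃ y : V → Bool, (∀ v ∈ U, y v = x v) ∧ f y = true)

/-- If `f` is Δ-decomposable with π, then the projections of `f` onto the sets
`Vᵢ ∪ Δ` are Δ-decomposition components of `f`. -/
theorem projections_are_components {V : Type*} [Fintype V] (Δ : Set V) {n : ℕ}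
    (hn : 2 ≤ n) (Vs : Fin n → Set V)
    (hdisj : ∀ i j, i ≠ j → Disjoint (Vs i) (Vs j))
    (hne : ∀ i, (Vs i).Nonempty)
    (hcover : (⋃ i, Vs i) = Δᶜ)
    (f : (V → Bool) → Bool)
    (hf : DeltaDecomposableWith f Δ Vs) :
    ∀ x : V → Bool, (f x = true ↔ ∀ i, proj (Vs i ∪ Δ) f x = true) := by
  obtain ⟨-, fs, hfs, hdep⟩ := hf
  intro x
  constructor
  · intro hx i
    simp only [proj, decide_eq_true_eq]
    exact ⟨x, fun v _ => rfl, hx⟩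
  · intro h
    rw [hfs]
    intro i
    have := h i
    simp only [proj, decide_eq_true_eq] at this
    obtain ⟨y, hy, hfy⟩ := this
    have : fs i y = true := (hfs y).mp hfy i
    rwa [hdep i x y (fun v hv => (hy v hv).symm)]
end

section
/- Let V be a finite type, Δ ⊆ V, f a boolean function on V, and π = {V₁, …, Vₙ} (n ≥ 2) pairwise disjoint nonempty subsets of V ∖ Δ covering V ∖ Δ. For d : Δ → Bool and x : (V ∖ Δ) → Bool, let d ⊕ x denote the combined assignment on V, and set A⟨d⟩ = { x : (V ∖ Δ) → Bool | f (d ⊕ x) = true }. Then f is Δ-decomposable with π if and only if for every d : Δ → Bool, A⟨d⟩ equals the set of all x : (V ∖ Δ) → Bool such that for each i ∈ {1, …, n} there exists x' ∈ A⟨d⟩ agreeing with x on Vᵢ (i.e., A⟨d⟩ is the cartesian combination of its projections onto V₁, …, Vₙ). -/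
/-- The combined assignment `d ⊕ x` on `V` of a Δ-assignment `d` and a
`(V ∖ Δ)`-assignment `x`. -/
noncomputable def combineS {V : Type*} (Δ : Set V)
    (d : Δ → Bool) (x : {v : V // v ∉ Δ} → Bool) : V → Bool :=
  open Classical in fun v => if h : v ∈ Δ then d ⟨v, h⟩ else x ⟨v, h⟩

/-- Decomposability criterion: `f` is Δ-decomposable with π iff for every
Δ-assignment `d`, the set `A⟨d⟩` of satisfying `(V ∖ Δ)`-assignments of the restriction
is the cartesian combination of its projections onto the blocks `Vᵢ`. -/
theorem decomposability_criterion {V : Type*} [Fintype V] (Δ : Set V) {n : ℕ}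
    (hn : 2 ≤ n) (Vs : Fin n → Set V)
    (hdisj : ∀ i j, i ≠ j → Disjoint (Vs i) (Vs j))
    (hne : ∀ i, (Vs i).Nonempty)
    (hcover : (⋃ i, Vs i) = Δᶜ)
    (f : (V → Bool) → Bool) :
    DeltaDecomposableWith f Δ Vs ↔
      ∀ d : Δ → Bool, ∀ x : {v : V // v ∉ Δ} → Bool,
        (f (combineS Δ d x) = true ↔
          ∀ i, ∃ x' : {v : V // v ∉ Δ} → Bool,
            f (combineS Δ d x') = true ∧
            ∀ v : {v : V // v ∉ Δ}, (v : V) ∈ Vs i → x' v = x v) := by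
  classical
  constructor
  · rintro ⟨-, fs, hf, hdep⟩ d x
    constructor
    · intro hfx i
      exact ⟨x, hfx, fun v _ => rfl⟩
    · intro h
      rw [hf]
      intro i
      obtain ⟨x', hx', hagree⟩ := h i
      have h1 := (hf _).mp hx' i
      rw [← h1]
      apply hdep i
      intro v hv
      rcases hv with hv | hv
      · have hvΔ : v ∉ Δ := by
          have : v ∈ Δᶜ := hcover ▸ Set.mem_iUnion.mpr ⟨i, hv⟩
          exact this
        simp only [combineS, dif_neg hvΔ]
        exact (hagree ⟨v, hvΔ⟩ hv).symm
      · simp only [combineS, dif_pos hv]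
  · intro h
    refine ⟨hn, fun i y => decide (∃ x' : {v : V // v ∉ Δ} → Bool,
        f (combineS Δ (fun v : Δ => y v) x') = true ∧
        ∀ v : {v : V // v ∉ Δ}, (v : V) ∈ Vs i → x' v = y v), ?_, ?_⟩
    · intro y
      have hy : combineS Δ (fun v : Δ => y v) (fun v : {v : V // v ∉ Δ} => y v) = y := by
        funext v; simp only [combineS]; split <;> rfl
      have h2 := h (fun v : Δ => y v) (fun v : {v : V // v ∉ Δ} => y v)
      rw [hy] at h2
      simpa using h2
    · intro i a b hab
      simp only [decide_eq_decide]
      have hd : (fun v : Δ => a v) = (fun v : Δ => b v) := by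
        funext v; exact hab v (Or.inr v.2)
      rw [hd]
      constructor <;> rintro ⟨x', hx', hag⟩ <;> refine ⟨x', hx', fun v hv => ?_⟩
      · rw [hag v hv]; exact hab v (Or.inl hv)
      · rw [hag v hv]; exact (hab v (Or.inl hv)).symm
end

section
/- Let V be a finite type, Δ ⊆ V, f a boolean function on V, and π = {V₁, …, Vₙ} (n ≥ 2) pairwise disjoint nonempty subsets of V ∖ Δ covering V ∖ Δ. For d : Δ → Bool let f_d be the boolean function on V ∖ Δ given by f_d x = f (d ⊕ x), where d ⊕ x is the combined assignment. Then f is Δ-decomposable with π if and only if for every d : Δ → Bool, f_d supports π, i.e., there exist boolean functions g₁, …, gₙ on V ∖ Δ with f_d x = g₁ x && ⋯ && gₙ x for all x and each gᵢ depending only on Vᵢ. (Thus Δ-decomposition reduces to ∅-decomposition of all Δ-restrictions of f with one common variable partition.) -/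
/-- `f` is Δ-decomposable with π iff for every Δ-assignment `d` the restricted
function `f_d = f (d ⊕ ·)` on `V ∖ Δ` supports π, i.e. is a conjunction of boolean
functions on `V ∖ Δ` each depending only on a block `Vᵢ`. -/
theorem delta_decomposition_reduces_to_empty_decomposition {V : Type*} [Fintype V]
    (Δ : Set V) {n : ℕ}
    (hn : 2 ≤ n) (Vs : Fin n → Set V)
    (hdisj : ∀ i j, i ≠ j → Disjoint (Vs i) (Vs j))
    (hne : ∀ i, (Vs i).Nonempty)
    (hcover : (⋃ i, Vs i) = Δᶜ)
    (f : (V → Bool) → Bool) :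
    DeltaDecomposableWith f Δ Vs ↔
      ∀ d : Δ → Bool, ∃ gs : Fin n → (({v : V // v ∉ Δ} → Bool) → Bool),
        (∀ x, f (combineS Δ d x) = true ↔ ∀ i, gs i x = true) ∧
        ∀ i, DependsOnlyOn (gs i) {v : {v : V // v ∉ Δ} | (v : V) ∈ Vs i} := by
  constructor
  · rintro ⟨-, fs, hfs, hdep⟩ d
    refine ⟨fun i x => fs i (combineS Δ d x), fun x => hfs _, fun i x y hxy => ?_⟩
    apply hdep i
    intro v hv
    unfold combineS
    split
    · rfl
    · next h =>
      rcases hv with hv | hv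
      · exact hxy ⟨v, h⟩ hv
      · exact absurd hv h
  · intro h
    choose gs hg hdep using h
    refine ⟨hn, fun i x => gs (fun v : Δ => x ↑v) i (fun v : {v : V // v ∉ Δ} => x ↑v),
      fun x => ?_, fun i x y hxy => ?_⟩
    · have hx : combineS Δ (fun v : Δ => x ↑v) (fun v : {v : V // v ∉ Δ} => x ↑v) = x := by
        funext v; unfold combineS; split <;> rfl
      have := hg (fun v : Δ => x ↑v) (fun v : {v : V // v ∉ Δ} => x ↑v)
      rwa [hx] at this
    · have hΔ : (fun v : Δ => x ↑v) = (fun v : Δ => y ↑v) := by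
        funext v; exact hxy v (Or.inr v.2)
      show gs (fun v : Δ => x ↑v) i (fun v : {v : V // v ∉ Δ} => x ↑v) =
        gs (fun v : Δ => y ↑v) i (fun v : {v : V // v ∉ Δ} => y ↑v)
      rw [hΔ]
      exact hdep _ i _ _ (fun v hv => hxy ↑v (Or.inl hv))
end

section
/- Let V be a finite type, Δ ⊆ V, and π = {V₁, …, Vₙ} (n ≥ 2) pairwise disjoint nonempty subsets of V ∖ Δ covering V ∖ Δ. Let f be a boolean function on V that is monotone, i.e., f x ≤ f y whenever x v ≤ y v for all v ∈ V (with false < true). If f is Δ-decomposable with π, then f has monotone decomposition components for π: there exist monotone boolean functions g₁, …, gₙ on V such that f x = g₁ x && ⋯ && gₙ x for all x and each gᵢ depends only on Vᵢ ∪ Δ. -/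
/-- A monotone (positive) boolean function which is Δ-decomposable with π has
monotone decomposition components for π. -/
theorem monotone_components_exist {V : Type*} [Fintype V] (Δ : Set V) {n : ℕ}
    (hn : 2 ≤ n) (Vs : Fin n → Set V)
    (hdisj : ∀ i j, i ≠ j → Disjoint (Vs i) (Vs j))
    (hne : ∀ i, (Vs i).Nonempty)
    (hcover : (⋃ i, Vs i) = Δᶜ)
    (f : (V → Bool) → Bool)
    (hmono : ∀ x y : V → Bool, (∀ v, x v ≤ y v) → f x ≤ f y)
    (hf : DeltaDecomposableWith f Δ Vs) :
    ∃ gs : Fin n → ((V → Bool) → Bool),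
      (∀ x, f x = true ↔ ∀ i, gs i x = true) ∧
      (∀ i, DependsOnlyOn (gs i) (Vs i ∪ Δ)) ∧
      (∀ i, ∀ x y : V → Bool, (∀ v, x v ≤ y v) → gs i x ≤ gs i y) := by
  classical
  obtain ⟨-, fs, hfs, hdep⟩ := hf
  refine ⟨fun i x => f (fun v => if v ∈ Vs i ∪ Δ then x v else true), ?_, ?_, ?_⟩
  · intro x
    constructor
    · intro hx i
      have := hmono x (fun v => if v ∈ Vs i ∪ Δ then x v else true)
        (fun v => by by_cases h : v ∈ Vs i ∪ Δ <;> simp [h])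
      rw [hx] at this
      exact le_antisymm (by simp) this
    · intro h
      rw [hfs]
      intro i
      have hi := (hfs _).mp (h i) i
      rw [← hdep i x (fun v => if v ∈ Vs i ∪ Δ then x v else true)
        (fun v hv => by simp [hv])] at hi
      exact hi
  · intro i x y hxy
    have : (fun v => if v ∈ Vs i ∪ Δ then x v else true)
         = (fun v => if v ∈ Vs i ∪ Δ then y v else true) := by
      funext v; by_cases h : v ∈ Vs i ∪ Δ <;> simp [h, hxy]
    show f _ = f _
    rw [this]
  · intro i x y hxy
    exact hmono _ _ (fun v => by by_cases h : v ∈ Vs i ∪ Δ <;> simp [h, hxy v])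
end

section
/- Let φ be a positive DNF over a finite type V, Δ ⊆ V, and π = {V₁, …, Vₙ} (n ≥ 2) pairwise disjoint nonempty subsets of V ∖ Δ covering V ∖ Δ. Let U be the collection of all sets that are unions of Δ-atoms of φ. Then the boolean function of φ is Δ-decomposable with π if and only if for every X ∈ U, the boolean function of φ⟨X⟩ (a function on assignments (V ∖ Δ) → Bool) supports π, i.e., equals a conjunction g₁ && ⋯ && gₙ of boolean functions on V ∖ Δ with each gᵢ depending only on Vᵢ. -/
/-- The boolean function of a positive DNF `φ` (a finite set of terms, each term a
finite set of variables): true iff some term is satisfied. -/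
def evalDNF {V : Type*} (φ : Finset (Finset V)) (x : V → Bool) : Bool :=
  decide (∃ t ∈ φ, ∀ v ∈ t, x v = true)

/-- The boolean function (on `(V ∖ Δ)`-assignments) of the DNF
`φ⟨X⟩ = { t ∖ Δ : t ∈ φ, t ∩ Δ ⊆ X }`; constantly false if this set of terms is empty. -/
def evalSub {V : Type*} [Fintype V] [DecidableEq V] (φ : Finset (Finset V))
    (Δ X : Finset V) (x : {v : V // v ∉ Δ} → Bool) : Bool :=
  decide (∃ t ∈ φ, t ∩ Δ ⊆ X ∧ ∀ v : {v : V // v ∉ Δ}, (v : V) ∈ t → x v = true)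

/-- `X` is a union of Δ-atoms of `φ` (a Δ-atom is a set `t ∩ Δ` for a term `t ∈ φ`). -/
def IsAtomUnion {V : Type*} [DecidableEq V] (φ : Finset (Finset V)) (Δ : Finset V)
    (X : Finset V) : Prop :=
  ∃ T ⊆ φ, T.Nonempty ∧ X = T.sup (fun t => t ∩ Δ)

section Aux
variable {V : Type*} [Fintype V] [DecidableEq V]

def joinΔ (Δ X : Finset V) (y : {v : V // v ∉ Δ} → Bool) (v : V) : Bool :=
  if hv : v ∉ Δ then y ⟨v, hv⟩ else decide (v ∈ X)

lemma evalSub_eq_evalDNF_join (φ : Finset (Finset V)) (Δ X : Finset V)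
    (y : {v : V // v ∉ Δ} → Bool) :
    evalSub φ Δ X y = evalDNF φ (joinΔ Δ X y) := by
  simp only [evalSub, evalDNF, decide_eq_decide]
  constructor
  · rintro ⟨t, ht, hX, hy⟩
    refine ⟨t, ht, fun v hv => ?_⟩
    unfold joinΔ
    split
    · next h => exact hy ⟨v, h⟩ hv
    · next h =>
      simp only [decide_eq_true_eq]
      exact hX (Finset.mem_inter.mpr ⟨hv, not_not.mp h⟩)
  · rintro ⟨t, ht, h⟩
    refine ⟨t, ht, fun v hv => ?_, fun v hv => ?_⟩
    · rw [Finset.mem_inter] at hv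
      have := h v hv.1
      rw [joinΔ, dif_neg (not_not.mpr hv.2)] at this
      simpa using this
    · have := h v hv
      rw [joinΔ, dif_pos v.2] at this
      simpa using this

lemma evalDNF_eq (φ : Finset (Finset V)) (Δ : Finset V) (x : V → Bool) :
    evalDNF φ x = evalSub φ Δ (Δ.filter (fun v => x v = true)) (fun v => x v) := by
  simp only [evalSub, evalDNF, decide_eq_decide]
  constructor
  · rintro ⟨t, ht, h⟩
    refine ⟨t, ht, fun v hv => ?_, fun v hv => h v hv⟩
    rw [Finset.mem_inter] at hv
    exact Finset.mem_filter.mpr ⟨hv.2, h v hv.1⟩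
  · rintro ⟨t, ht, hX, hy⟩
    refine ⟨t, ht, fun v hv => ?_⟩
    by_cases hvΔ : v ∈ Δ
    · exact (Finset.mem_filter.mp (hX (Finset.mem_inter.mpr ⟨hv, hvΔ⟩))).2
    · exact hy ⟨v, hvΔ⟩ hv

lemma evalSub_hull (φ : Finset (Finset V)) (Δ S : Finset V) :
    evalSub φ Δ S = evalSub φ Δ
      ((φ.filter (fun t => t ∩ Δ ⊆ S)).sup (fun t => t ∩ Δ)) := by
  funext y
  simp only [evalSub, decide_eq_decide]
  have hYS : (φ.filter (fun t => t ∩ Δ ⊆ S)).sup (fun t => t ∩ Δ) ⊆ S :=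
    Finset.sup_le fun t ht => (Finset.mem_filter.mp ht).2
  constructor
  · rintro ⟨t, ht, hsub, hy⟩
    exact ⟨t, ht, Finset.le_sup (f := fun t => t ∩ Δ)
      (Finset.mem_filter.mpr ⟨ht, hsub⟩), hy⟩
  · rintro ⟨t, ht, hsub, hy⟩
    exact ⟨t, ht, hsub.trans hYS, hy⟩

end Aux

/-- Δ-decomposability criterion for a positive DNF: `evalDNF φ` is Δ-decomposable
with π iff for every union `X` of Δ-atoms of `φ`, the boolean function of `φ⟨X⟩`
supports π. -/
theorem delta_decomposability_criterion_posDNF {V : Type*} [Fintype V] [DecidableEq V]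
    (φ : Finset (Finset V)) (hφ : φ.Nonempty)
    (Δ : Finset V) {n : ℕ}
    (hn : 2 ≤ n) (Vs : Fin n → Set V)
    (hdisj : ∀ i j, i ≠ j → Disjoint (Vs i) (Vs j))
    (hne : ∀ i, (Vs i).Nonempty)
    (hcover : (⋃ i, Vs i) = (↑Δ : Set V)ᶜ) :
    DeltaDecomposableWith (evalDNF φ) (↑Δ : Set V) Vs ↔
      ∀ X : Finset V, IsAtomUnion φ Δ X →
        ∃ gs : Fin n → (({v : V // v ∉ Δ} → Bool) → Bool),
          (∀ x, evalSub φ Δ X x = true ↔ ∀ i, gs i x = true) ∧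
          ∀ i, DependsOnlyOn (gs i) {v : {v : V // v ∉ Δ} | (v : V) ∈ Vs i} := by
  constructor
  · rintro ⟨-, fs, hiff, hdep⟩ X hX
    refine ⟨fun i y => fs i (joinΔ Δ X y), fun y => ?_, fun i y z hyz => ?_⟩
    · rw [evalSub_eq_evalDNF_join]; exact hiff _
    · apply hdep i
      intro v hv
      rcases hv with hv | hv
      · have hvΔ : v ∉ Δ := by
          have : v ∈ (↑Δ : Set V)ᶜ := hcover ▸ Set.mem_iUnion.mpr ⟨i, hv⟩
          simpa using this
        simp only [joinΔ, dif_pos hvΔ]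
        exact hyz ⟨v, hvΔ⟩ hv
      · simp only [joinΔ, dif_neg (not_not.mpr (Finset.mem_coe.mp hv))]
  · intro H
    classical
    choose gs hgs1 hgs2 using H
    set g : Finset V → Fin n → (({v : V // v ∉ Δ} → Bool) → Bool) :=
      fun S => if hT : (φ.filter (fun t => t ∩ Δ ⊆ S)).Nonempty
        then gs _ ⟨_, Finset.filter_subset _ _, hT, rfl⟩
        else fun _ _ => false with hg
    refine ⟨hn, fun i x => g (Δ.filter (fun v => x v = true)) i (fun v => x ↑v),
      fun x => ?_, fun i x y hxy => ?_⟩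
    · by_cases hT : (φ.filter (fun t => t ∩ Δ ⊆ Δ.filter (fun v => x v = true))).Nonempty
      · have h1 : evalDNF φ x = evalSub φ Δ
            ((φ.filter (fun t => t ∩ Δ ⊆ Δ.filter (fun v => x v = true))).sup
              (fun t => t ∩ Δ)) (fun v => x ↑v) := by
          rw [evalDNF_eq φ Δ x, evalSub_hull]
        rw [h1]
        simp only [hg, dif_pos hT]
        exact hgs1 _ _ _
      · simp only [hg, dif_neg hT]
        constructor
        · intro hx
          exfalso
          rw [evalDNF_eq φ Δ x] at hx
          simp only [evalSub, decide_eq_true_eq] at hx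
          obtain ⟨t, ht, hsub, -⟩ := hx
          exact hT ⟨t, Finset.mem_filter.mpr ⟨ht, hsub⟩⟩
        · intro h
          have := h ⟨0, by omega⟩
          simp at this
    · have hΔ : ∀ v ∈ Δ, x v = y v := fun v hv => hxy v (Or.inr (Finset.mem_coe.mpr hv))
      have hS : Δ.filter (fun v => x v = true) = Δ.filter (fun v => y v = true) := by
        apply Finset.filter_congr
        intro v hv
        rw [hΔ v hv]
      show g (Δ.filter (fun v => x v = true)) i (fun v => x ↑v) =
        g (Δ.filter (fun v => y v = true)) i (fun v => y ↑v)
      rw [hS]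
      simp only [hg]
      by_cases hT : (φ.filter (fun t => t ∩ Δ ⊆ Δ.filter (fun v => y v = true))).Nonempty
      · simp only [dif_pos hT]
        exact hgs2 _ _ i _ _ (fun v hv => hxy ↑v (Or.inl hv))
      · simp only [dif_neg hT]
end

section
/- Let V be a finite type and π = {V₁, …, V_m} (m ≥ 2) pairwise disjoint nonempty subsets covering V. Let f₁, …, fₙ (n ≥ 1) be boolean functions on V with the following property: for all j, k ∈ {1, …, n} there exists a subset I ⊆ {1, …, n} with j, k ∈ I such that the pointwise disjunction ⋁_{i ∈ I} fᵢ is ∅-decomposable with π. Then f₁ ∨ ⋯ ∨ fₙ (pointwise disjunction) is ∅-decomposable with π. -/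
/-- `f` is ∅-decomposable with the partition `π = {Vs 0, …, Vs (m-1)}` of the
variables: `m ≥ 2` and `f` is a pointwise conjunction of boolean functions each
depending only on one block `Vs i`. -/
def EmptyDecomposableWith {V : Type*} (f : (V → Bool) → Bool)
    {m : ℕ} (Vs : Fin m → Set V) : Prop :=
  2 ≤ m ∧ ∃ fs : Fin m → ((V → Bool) → Bool),
    (∀ x, f x = true ↔ ∀ i, fs i x = true) ∧
    ∀ i, DependsOnlyOn (fs i) (Vs i)

/-- Decomposition Lemma: if for all `j, k` there is a subset `I ∋ j, k` of indices such
that `⋁_{i ∈ I} fᵢ` is ∅-decomposable with π, then so is `f₁ ∨ ⋯ ∨ fₙ`. -/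
theorem decomposition_lemma {V : Type*} [Fintype V] {m : ℕ} (hm : 2 ≤ m)
    (Vs : Fin m → Set V)
    (hdisj : ∀ i j, i ≠ j → Disjoint (Vs i) (Vs j))
    (hne : ∀ i, (Vs i).Nonempty)
    (hcover : (⋃ i, Vs i) = Set.univ)
    {n : ℕ} (hn : 1 ≤ n) (fs : Fin n → ((V → Bool) → Bool))
    (hyp : ∀ j k : Fin n, ∃ I : Finset (Fin n), j ∈ I ∧ k ∈ I ∧
      EmptyDecomposableWith (fun x => decide (∃ i ∈ I, fs i x = true)) Vs) :
    EmptyDecomposableWith (fun x => decide (∃ i, fs i x = true)) Vs := by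
  classical
  -- hybrid lemma
  have hyb : ∀ (p : Fin m) (y z : V → Bool), (∃ i, fs i y = true) → (∃ i, fs i z = true) →
      ∃ i, fs i (fun v => if v ∈ Vs p then y v else z v) = true := by
    rintro p y z ⟨j, hj⟩ ⟨k, hk⟩
    obtain ⟨I, hjI, hkI, _, gI, hGI, hdep⟩ := hyp j k
    have hy' : ∀ q, gI q y = true := by
      refine (hGI y).mp ?_
      simp only [decide_eq_true_eq]
      exact ⟨j, hjI, hj⟩
    have hz' : ∀ q, gI q z = true := by
      refine (hGI z).mp ?_
      simp only [decide_eq_true_eq]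
      exact ⟨k, hkI, hk⟩
    have hw : ∀ q, gI q (fun v => if v ∈ Vs p then y v else z v) = true := by
      intro q
      by_cases h : q = p
      · subst h
        rw [hdep q _ y (fun v hv => if_pos hv)]
        exact hy' q
      · rw [hdep q _ z (fun v hv => if_neg (fun hvp =>
          (Set.disjoint_left.mp (hdisj q p h) hv) hvp))]
        exact hz' q
    have := (hGI _).mpr hw
    simp only [decide_eq_true_eq] at this
    obtain ⟨i, _, hi⟩ := this
    exact ⟨i, hi⟩
  refine ⟨hm, fun p x => decide (∃ y : V → Bool,
      (∀ v ∈ Vs p, y v = x v) ∧ ∃ i, fs i y = true), fun x => ?_, ?_⟩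
  · simp only [decide_eq_true_eq]
    constructor
    · intro hx p
      exact ⟨x, fun v _ => rfl, hx⟩
    · intro h
      have key : ∀ S : Finset (Fin m), ∃ z : V → Bool,
          (∃ i, fs i z = true) ∧ ∀ p ∈ S, ∀ v ∈ Vs p, z v = x v := by
        intro S
        induction S using Finset.induction_on with
        | empty =>
          obtain ⟨y, _, hy2⟩ := h ⟨0, by omega⟩
          exact ⟨y, hy2, by simp⟩
        | @insert p S hp ih =>
          obtain ⟨z, hz1, hz2⟩ := ih
          obtain ⟨y, hy1, hy2⟩ := h p
          refine ⟨fun v => if v ∈ Vs p then y v else z v, hyb p y z hy2 hz1, ?_⟩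
          intro q hq v hv
          rcases Finset.mem_insert.mp hq with h | h
          · subst h
            simp only [if_pos hv]
            exact hy1 v hv
          · by_cases hqp : q = p
            · subst hqp
              simp only [if_pos hv]; exact hy1 v hv
            · simp only [if_neg (fun hvp => (Set.disjoint_left.mp (hdisj q p hqp) hv) hvp)]
              exact hz2 q h v hv
      obtain ⟨z, hz1, hz2⟩ := key Finset.univ
      have : z = x := by
        funext v
        have hv : v ∈ ⋃ i, Vs i := by rw [hcover]; trivial
        obtain ⟨i, hi⟩ := Set.mem_iUnion.mp hv
        exact hz2 i (Finset.mem_univ i) v hi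
      rwa [this] at hz1
  · intro p x y hxy
    refine decide_eq_decide.mpr ?_
    constructor
    · rintro ⟨w, hw1, hw2⟩
      exact ⟨w, fun v hv => (hw1 v hv).trans (hxy v hv), hw2⟩
    · rintro ⟨w, hw1, hw2⟩
      exact ⟨w, fun v hv => (hw1 v hv).trans (hxy v hv).symm, hw2⟩
end

section
/- Let φ be a positive DNF over a finite type V, Δ ⊆ V, and π = {V₁, …, Vₙ} (n ≥ 2) pairwise disjoint nonempty subsets of V ∖ Δ covering V ∖ Δ. Then the boolean function of φ is Δ-decomposable with π if and only if for every pair of Δ-atoms a₁, a₂ of φ (not necessarily distinct), the boolean function of φ⟨a₁ ∪ a₂⟩ supports π, i.e., equals a pointwise conjunction g₁ && ⋯ && gₙ of boolean functions on V ∖ Δ with each gᵢ depending only on Vᵢ. (Thus Δ-decomposability can be checked on the quadratically many substitutions determined by pairs of Δ-atoms.) -/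
section AuxLemmas

variable {V : Type*} [Fintype V] [DecidableEq V]

lemma evalDNF_iff (φ : Finset (Finset V)) (x : V → Bool) :
    evalDNF φ x = true ↔ ∃ t ∈ φ, ∀ v ∈ t, x v = true := by
  simp only [evalDNF, decide_eq_true_eq]

lemma evalSub_iff (φ : Finset (Finset V)) (Δ X : Finset V) (x : {v : V // v ∉ Δ} → Bool) :
    evalSub φ Δ X x = true ↔
      ∃ t ∈ φ, t ∩ Δ ⊆ X ∧ ∀ v : {v : V // v ∉ Δ}, (v : V) ∈ t → x v = true := by
  unfold evalSub; exact decide_eq_true_iff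

/-- Extend an assignment on `V ∖ Δ` to all of `V`, using `χ_X` on `Δ`. -/
noncomputable def extΔ (Δ X : Finset V) (x : {v : V // v ∉ Δ} → Bool) (v : V) : Bool :=
  if h : v ∈ Δ then decide (v ∈ X) else x ⟨v, h⟩

lemma evalSub_eq_evalDNF (φ : Finset (Finset V)) (Δ X : Finset V)
    (x : {v : V // v ∉ Δ} → Bool) :
    evalSub φ Δ X x = evalDNF φ (extΔ Δ X x) := by
  unfold evalSub evalDNF
  rw [decide_eq_decide]
  constructor
  · rintro ⟨t, ht, hsub, hall⟩
    refine ⟨t, ht, fun v hv => ?_⟩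
    unfold extΔ
    by_cases h : v ∈ Δ
    · rw [dif_pos h, decide_eq_true_iff]
      exact hsub (Finset.mem_inter.mpr ⟨hv, h⟩)
    · rw [dif_neg h]
      exact hall ⟨v, h⟩ hv
  · rintro ⟨t, ht, hall⟩
    refine ⟨t, ht, fun v hv => ?_, fun v hv => ?_⟩
    · rcases Finset.mem_inter.mp hv with ⟨hv1, hv2⟩
      have := hall v hv1
      rw [extΔ, dif_pos hv2, decide_eq_true_iff] at this
      exact this
    · have := hall (v : V) hv
      rw [extΔ, dif_neg v.2] at this
      simpa using this

/-- From a π-decomposition of `φ⟨Y⟩` we extract the term condition: any choice of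
terms with atoms in `Y` dominates some term of `φ⟨Y⟩`. -/
lemma decomp_to_terms (φ : Finset (Finset V)) (Δ Y : Finset V)
    {n : ℕ} (Vs : Fin n → Set V)
    (hdisj : ∀ i j, i ≠ j → Disjoint (Vs i) (Vs j))
    (gs : Fin n → (({v : V // v ∉ Δ} → Bool) → Bool))
    (hgs : ∀ x, evalSub φ Δ Y x = true ↔ ∀ i, gs i x = true)
    (hdep : ∀ i, DependsOnlyOn (gs i) {v : {v : V // v ∉ Δ} | (v : V) ∈ Vs i})
    (ts : Fin n → Finset V) (hts : ∀ i, ts i ∈ φ) (hatom : ∀ i, ts i ∩ Δ ⊆ Y) :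
    ∃ t ∈ φ, t ∩ Δ ⊆ Y ∧ ∀ v ∈ t, v ∉ Δ → ∃ i, v ∈ ts i ∧ v ∈ Vs i := by
  classical
  set x : {v : V // v ∉ Δ} → Bool :=
    fun v => decide (∃ i, (v : V) ∈ ts i ∧ (v : V) ∈ Vs i) with hxdef
  have hx : evalSub φ Δ Y x = true := by
    rw [hgs]
    intro i
    have hy : evalSub φ Δ Y (fun v => decide ((v : V) ∈ ts i)) = true := by
      rw [evalSub_iff]
      exact ⟨ts i, hts i, hatom i, fun v hv => by simpa using hv⟩
    have h1 : gs i (fun v => decide ((v : V) ∈ ts i)) = true := (hgs _).mp hy i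
    have h2 : gs i x = gs i (fun v => decide ((v : V) ∈ ts i)) := by
      apply hdep i
      intro v hv
      simp only [Set.mem_setOf_eq] at hv
      rw [hxdef, decide_eq_decide]
      constructor
      · rintro ⟨j, hj1, hj2⟩
        rcases eq_or_ne j i with rfl | hne
        · exact hj1
        · exact absurd hv (fun h => Set.disjoint_left.mp (hdisj j i hne) hj2 h)
      · intro h; exact ⟨i, h, hv⟩
    rw [h2]; exact h1
  rw [evalSub_iff] at hx
  obtain ⟨t, ht, hsub, hall⟩ := hx
  refine ⟨t, ht, hsub, fun v hv hvΔ => ?_⟩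
  have := hall ⟨v, hvΔ⟩ hv
  rw [hxdef] at this
  simpa using this

/-- The key induction: the pairwise term condition implies the term condition for
arbitrary `X`. -/
lemma claim_terms (φ : Finset (Finset V)) (Δ : Finset V)
    {n : ℕ} (Vs : Fin n → Set V)
    (hdisj : ∀ i j, i ≠ j → Disjoint (Vs i) (Vs j))
    (hVΔ : ∀ i, ∀ v ∈ Vs i, v ∉ Δ)
    (P : ∀ a₁ a₂ : Finset V, (∃ t ∈ φ, a₁ = t ∩ Δ) → (∃ t ∈ φ, a₂ = t ∩ Δ) →
      ∀ ss : Fin n → Finset V, (∀ i, ss i ∈ φ) → (∀ i, ss i ∩ Δ ⊆ a₁ ∪ a₂) →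
      ∃ t ∈ φ, t ∩ Δ ⊆ a₁ ∪ a₂ ∧ ∀ v ∈ t, v ∉ Δ → ∃ i, v ∈ ss i ∧ v ∈ Vs i)
    (hn : 1 ≤ n)
    (X : Finset V) (ts : Fin n → Finset V) (hts : ∀ i, ts i ∈ φ)
    (hatom : ∀ i, ts i ∩ Δ ⊆ X) :
    ∃ t ∈ φ, t ∩ Δ ⊆ X ∧ ∀ i, ∀ v ∈ t, v ∈ Vs i → v ∈ ts i := by
  classical
  have key : ∀ k, k ≤ n → ∃ r ∈ φ, r ∩ Δ ⊆ X ∧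
      ∀ i : Fin n, (i : ℕ) < k → ∀ v ∈ r, v ∈ Vs i → v ∈ ts i := by
    intro k
    induction k with
    | zero =>
      intro _
      exact ⟨ts ⟨0, hn⟩, hts _, hatom _, fun i hi => absurd hi (Nat.not_lt_zero _)⟩
    | succ k ih =>
      intro hk
      obtain ⟨r, hr, hrX, hrprop⟩ := ih (Nat.le_of_succ_le hk)
      have hkn : k < n := hk
      set ik : Fin n := ⟨k, hkn⟩ with hikdef
      set ss : Fin n → Finset V := fun i => if i = ik then ts ik else r with hssdef
      obtain ⟨t, ht, htsub, htall⟩ :=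
        P (r ∩ Δ) (ts ik ∩ Δ) ⟨r, hr, rfl⟩ ⟨ts ik, hts ik, rfl⟩ ss
          (fun i => by
            show (if i = ik then ts ik else r) ∈ φ
            split_ifs <;> [exact hts ik; exact hr])
          (fun i => by
            show (if i = ik then ts ik else r) ∩ Δ ⊆ r ∩ Δ ∪ ts ik ∩ Δ
            split_ifs <;> [exact Finset.subset_union_right; exact Finset.subset_union_left])
      refine ⟨t, ht, ?_, ?_⟩
      · refine htsub.trans (Finset.union_subset hrX ?_)
        exact hatom ik
      · intro i hi v hv hvV
        have hvΔ : v ∉ Δ := hVΔ i v hvV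
        obtain ⟨j, hj1, hj2⟩ := htall v hv hvΔ
        have hji : j = i := by
          by_contra hne
          exact Set.disjoint_left.mp (hdisj j i hne) hj2 hvV
        subst hji
        by_cases h : j = ik
        · have : ss j = ts ik := by rw [hssdef]; simp [h]
          rw [this] at hj1
          rw [h]
          exact hj1
        · have hlt : (j : ℕ) < k := by
            rcases Nat.lt_succ_iff_lt_or_eq.mp hi with h' | h'
            · exact h'
            · exact absurd (Fin.ext h') h
          have : ss j = r := by rw [hssdef]; simp [h]
          rw [this] at hj1
          exact hrprop j hlt v hj1 hvV
  obtain ⟨t, ht, h1, h2⟩ := key n le_rfl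
  exact ⟨t, ht, h1, fun i v hv hvV => h2 i i.isLt v hv hvV⟩

end AuxLemmas

/-- A positive DNF `φ` is Δ-decomposable with π iff for every pair of Δ-atoms
`a₁, a₂` of `φ` (not necessarily distinct), the boolean function of `φ⟨a₁ ∪ a₂⟩`
supports π. -/
theorem delta_decomposability_via_atom_pairs {V : Type*} [Fintype V] [DecidableEq V]
    (φ : Finset (Finset V)) (hφ : φ.Nonempty)
    (Δ : Finset V) {n : ℕ}
    (hn : 2 ≤ n) (Vs : Fin n → Set V)
    (hdisj : ∀ i j, i ≠ j → Disjoint (Vs i) (Vs j))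
    (hne : ∀ i, (Vs i).Nonempty)
    (hcover : (⋃ i, Vs i) = (↑Δ : Set V)ᶜ) :
    DeltaDecomposableWith (evalDNF φ) (↑Δ : Set V) Vs ↔
      ∀ a₁ a₂ : Finset V, (∃ t ∈ φ, a₁ = t ∩ Δ) → (∃ t ∈ φ, a₂ = t ∩ Δ) →
        ∃ gs : Fin n → (({v : V // v ∉ Δ} → Bool) → Bool),
          (∀ x, evalSub φ Δ (a₁ ∪ a₂) x = true ↔ ∀ i, gs i x = true) ∧
          ∀ i, DependsOnlyOn (gs i) {v : {v : V // v ∉ Δ} | (v : V) ∈ Vs i} := by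
  classical
  have hVΔ : ∀ i, ∀ v ∈ Vs i, v ∉ Δ := by
    intro i v hv
    have h1 : v ∈ ⋃ i, Vs i := Set.mem_iUnion.mpr ⟨i, hv⟩
    rw [hcover] at h1
    simpa using h1
  constructor
  · rintro ⟨-, fs, hfs, hdep⟩ a₁ a₂ _ _
    refine ⟨fun i x => fs i (extΔ Δ (a₁ ∪ a₂) x), fun x => ?_, fun i => ?_⟩
    · rw [evalSub_eq_evalDNF]
      exact hfs _
    · intro x y hxy
      apply hdep i
      intro v hv
      unfold extΔ
      rcases hv with hv | hv
      · have hvΔ : v ∉ Δ := hVΔ i v hv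
        rw [dif_neg hvΔ, dif_neg hvΔ]
        exact hxy ⟨v, hvΔ⟩ hv
      · have hvΔ : v ∈ Δ := by simpa using hv
        rw [dif_pos hvΔ, dif_pos hvΔ]
  · intro hpairs
    have P : ∀ a₁ a₂ : Finset V, (∃ t ∈ φ, a₁ = t ∩ Δ) → (∃ t ∈ φ, a₂ = t ∩ Δ) →
        ∀ ss : Fin n → Finset V, (∀ i, ss i ∈ φ) → (∀ i, ss i ∩ Δ ⊆ a₁ ∪ a₂) →
        ∃ t ∈ φ, t ∩ Δ ⊆ a₁ ∪ a₂ ∧ ∀ v ∈ t, v ∉ Δ → ∃ i, v ∈ ss i ∧ v ∈ Vs i := by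
      intro a₁ a₂ h₁ h₂ ss hss hssa
      obtain ⟨gs, hgs, hdep⟩ := hpairs a₁ a₂ h₁ h₂
      exact decomp_to_terms φ Δ (a₁ ∪ a₂) Vs hdisj gs hgs hdep ss hss hssa
    refine ⟨hn, fun i z => evalDNF φ (fun v => if v ∈ Δ ∨ v ∈ Vs i then z v else true),
      fun x => ?_, fun i => ?_⟩
    · constructor
      · intro hx i
        rw [evalDNF_iff] at hx ⊢
        obtain ⟨t, ht, hall⟩ := hx
        refine ⟨t, ht, fun v hv => ?_⟩
        by_cases h : v ∈ Δ ∨ v ∈ Vs i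
        · rw [if_pos h]; exact hall v hv
        · rw [if_neg h]
      · intro hall
        have hexists : ∀ i : Fin n, ∃ t ∈ φ,
            ∀ v ∈ t, (if v ∈ Δ ∨ v ∈ Vs i then x v else true) = true := by
          intro i
          have := hall i
          rw [evalDNF_iff] at this
          exact this
        choose ts hts hprop using hexists
        set X : Finset V := Δ.filter (fun v => x v = true) with hXdef
        have hatom : ∀ i, ts i ∩ Δ ⊆ X := by
          intro i v hv
          rcases Finset.mem_inter.mp hv with ⟨hv1, hv2⟩
          have := hprop i v hv1
          rw [if_pos (Or.inl hv2)] at this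
          rw [hXdef, Finset.mem_filter]
          exact ⟨hv2, this⟩
        obtain ⟨t, ht, htX, hincl⟩ :=
          claim_terms φ Δ Vs hdisj hVΔ P (le_trans (by norm_num) hn) X ts hts hatom
        rw [evalDNF_iff]
        refine ⟨t, ht, fun v hv => ?_⟩
        by_cases h : v ∈ Δ
        · have : v ∈ X := htX (Finset.mem_inter.mpr ⟨hv, h⟩)
          rw [hXdef, Finset.mem_filter] at this
          exact this.2
        · have hv1 : v ∈ ⋃ i, Vs i := by rw [hcover]; simpa using h
          obtain ⟨i, hvV⟩ := Set.mem_iUnion.mp hv1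
          have hvts : v ∈ ts i := hincl i v hv hvV
          have := hprop i v hvts
          rwa [if_pos (Or.inr hvV)] at this
    · intro z z' hzz
      have : (fun v => if v ∈ Δ ∨ v ∈ Vs i then z v else true)
          = (fun v => if v ∈ Δ ∨ v ∈ Vs i then z' v else true) := by
        funext v
        by_cases h : v ∈ Δ ∨ v ∈ Vs i
        · rw [if_pos h, if_pos h]
          apply hzz
          rcases h with h | h
          · exact Or.inr (by simpa using h)
          · exact Or.inl h
        · rw [if_neg h, if_neg h]
      exact congrArg (evalDNF φ) this
end

section
/- Let φ be a positive DNF over a finite type V and Δ ⊆ V. If the boolean function of φ is Δ-decomposable with a partition π₁ of V ∖ Δ and also Δ-decomposable with a partition π₂ of V ∖ Δ, then it is Δ-decomposable with the common refinement π = { B₁ ∩ B₂ : B₁ ∈ π₁, B₂ ∈ π₂, B₁ ∩ B₂ ≠ ∅ }. Consequently, a positive DNF has a unique finest variable partition with respect to Δ. -/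
/-- `f` is Δ-decomposable with the partition `π` (a set of blocks, at least two of
them): `f` is a pointwise conjunction of components, one for each block `B ∈ π`,
each depending only on `B ∪ Δ`. -/
def DeltaDecomposableWithSet {V : Type*} (f : (V → Bool) → Bool) (Δ : Set V)
    (π : Set (Set V)) : Prop :=
  π.Nontrivial ∧ ∃ g : Set V → ((V → Bool) → Bool),
    (∀ x, f x = true ↔ ∀ B ∈ π, g B x = true) ∧
    ∀ B ∈ π, DependsOnlyOn (g B) (B ∪ Δ)

open Classical in
/-- Replace the values of `x` outside `S ∪ Δ` by `true`. -/
noncomputable def maskFn {V : Type*} (Δ S : Set V) (x : V → Bool) : V → Bool :=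
  fun v => if v ∈ S ∪ Δ then x v else true

/-- A positive DNF is monotone. -/
lemma evalDNF_mono {V : Type*} (φ : Finset (Finset V)) {x y : V → Bool}
    (h : ∀ v, x v = true → y v = true) (hx : evalDNF φ x = true) :
    evalDNF φ y = true := by
  simp only [evalDNF, decide_eq_true_eq] at *
  obtain ⟨t, ht, hall⟩ := hx
  exact ⟨t, ht, fun v hv => h v (hall v hv)⟩

lemma le_maskFn {V : Type*} (Δ S : Set V) (x : V → Bool) :
    ∀ v, x v = true → maskFn Δ S x v = true := by
  intro v hv
  simp only [maskFn]
  split <;> simp [hv]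

lemma maskFn_agree {V : Type*} (Δ S : Set V) (x : V → Bool) :
    ∀ v ∈ S ∪ Δ, maskFn Δ S x v = x v := by
  intro v hv
  simp [maskFn, hv]

lemma maskFn_comp {V : Type*} (Δ B₁ B₂ : Set V) (x : V → Bool) :
    maskFn Δ B₂ (maskFn Δ B₁ x) = maskFn Δ (B₁ ∩ B₂) x := by
  funext v
  by_cases hΔ : v ∈ Δ <;> by_cases h1 : v ∈ B₁ <;> by_cases h2 : v ∈ B₂ <;>
    simp [maskFn, hΔ, h1, h2]

/-- Canonical form of a Δ-decomposition: `f x` holds iff it holds on every masked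
version of `x`. -/
lemma canonical {V : Type*} (φ : Finset (Finset V)) (Δ : Set V) (π : Set (Set V))
    (hd : DeltaDecomposableWithSet (evalDNF φ) Δ π) (x : V → Bool) :
    evalDNF φ x = true ↔ ∀ B ∈ π, evalDNF φ (maskFn Δ B x) = true := by
  obtain ⟨-, g, hiff, hdep⟩ := hd
  constructor
  · intro hx B _
    exact evalDNF_mono φ (le_maskFn Δ B x) hx
  · intro h
    rw [hiff]
    intro B hB
    have := (hiff (maskFn Δ B x)).mp (h B hB) B hB
    rwa [hdep B hB (maskFn Δ B x) x (maskFn_agree Δ B x)] at this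

/-- If a positive DNF is Δ-decomposable with partitions `π₁` and `π₂` of `V ∖ Δ`,
then it is Δ-decomposable with their common refinement
`{ B₁ ∩ B₂ : B₁ ∈ π₁, B₂ ∈ π₂, B₁ ∩ B₂ ≠ ∅ }`; consequently, a positive DNF has a
unique finest variable partition wrt Δ. -/
theorem common_refinement_decomposition {V : Type*} [Fintype V]
    (φ : Finset (Finset V)) (hφ : φ.Nonempty) (Δ : Set V)
    (π₁ π₂ : Set (Set V))
    (h₁ne : ∀ B ∈ π₁, B.Nonempty) (h₁disj : π₁.PairwiseDisjoint id)
    (h₁cover : ⋃₀ π₁ = Δᶜ)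
    (h₂ne : ∀ B ∈ π₂, B.Nonempty) (h₂disj : π₂.PairwiseDisjoint id)
    (h₂cover : ⋃₀ π₂ = Δᶜ)
    (hd₁ : DeltaDecomposableWithSet (evalDNF φ) Δ π₁)
    (hd₂ : DeltaDecomposableWithSet (evalDNF φ) Δ π₂) :
    DeltaDecomposableWithSet (evalDNF φ) Δ
      {C : Set V | ∃ B₁ ∈ π₁, ∃ B₂ ∈ π₂, C = B₁ ∩ B₂ ∧ C.Nonempty} := by
  set π : Set (Set V) := {C : Set V | ∃ B₁ ∈ π₁, ∃ B₂ ∈ π₂, C = B₁ ∩ B₂ ∧ C.Nonempty}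
    with hπ
  -- every block of π₁ contains a block of π
  have hsub : ∀ B₁ ∈ π₁, ∃ C ∈ π, C ⊆ B₁ ∧ C.Nonempty := by
    intro B₁ hB₁
    obtain ⟨v, hv⟩ := h₁ne B₁ hB₁
    have hvΔ : v ∈ Δᶜ := by
      rw [← h₁cover]; exact ⟨B₁, hB₁, hv⟩
    rw [← h₂cover] at hvΔ
    obtain ⟨B₂, hB₂, hv₂⟩ := hvΔ
    exact ⟨B₁ ∩ B₂, ⟨B₁, hB₁, B₂, hB₂, rfl, ⟨v, hv, hv₂⟩⟩,
      Set.inter_subset_left, ⟨v, hv, hv₂⟩⟩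
  have hnt : π.Nontrivial := by
    obtain ⟨B₁, hB₁, B₁', hB₁', hne⟩ := hd₁.1
    obtain ⟨C, hC, hCs, hCne⟩ := hsub B₁ hB₁
    obtain ⟨C', hC', hCs', hCne'⟩ := hsub B₁' hB₁'
    refine ⟨C, hC, C', hC', ?_⟩
    intro h
    subst h
    obtain ⟨v, hv⟩ := hCne
    exact (h₁disj hB₁ hB₁' hne).ne_of_mem (hCs hv) (hCs' hv) rfl
  refine ⟨hnt, fun C => evalDNF φ ∘ maskFn Δ C, ?_, ?_⟩
  · intro x
    constructor
    · intro hx C _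
      exact evalDNF_mono φ (le_maskFn Δ C x) hx
    · intro h
      rw [canonical φ Δ π₁ hd₁]
      intro B₁ hB₁
      rw [canonical φ Δ π₂ hd₂]
      intro B₂ hB₂
      rw [maskFn_comp]
      by_cases hne : (B₁ ∩ B₂).Nonempty
      · exact h (B₁ ∩ B₂) ⟨B₁, hB₁, B₂, hB₂, rfl, hne⟩
      · obtain ⟨C, hC, -, -⟩ := hsub B₁ hB₁
        have hC0 := h C hC
        refine evalDNF_mono φ (x := maskFn Δ C x) ?_ hC0
        intro v hv
        simp only [maskFn] at *
        split
        · next hmem =>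
          rcases hmem with hmem | hmem
          · exact absurd hmem (by simp [Set.not_nonempty_iff_eq_empty.mp hne])
          · rw [← hv]; simp [hmem]
        · rfl
  · intro C _ x y hxy
    simp only [Function.comp]
    congr 1
    funext v
    simp only [maskFn]
    split
    · next hmem => exact hxy v hmem
    · rfl
end
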